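/- The minimum of the six quantities √(2(1 − tr(ρ_S²))), taken over the seven bipartitions S ∈ {{1},{2},{3},{4},{1,2},{1,3},{1,4}}, equals √3/2 for both |ψ_A⟩ = (|0000⟩+|1011⟩+|1101⟩+|1110⟩)/2 and |ψ_B⟩ = (|0000⟩+|0101⟩+|1000⟩+|1110⟩)/2; hence the genuinely multipartite concurrence C_GME cannot distinguish |ψ_A⟩ from |ψ_B⟩. -/

import Mathlib

open scoped BigOperators

noncomputable section

/-- A four-qubit pure state amplitude function on the computational basis. -/
abbrev QState := Fin 2 → Fin 2 → Fin 2 → Fin 2 → ℂ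

/-- Reduced density matrix of qubit 1. -/
def rho1 (ψ : QState) (a b : Fin 2) : ℂ := ∑ i, ∑ j, ∑ k, ψ a i j k * star (ψ b i j k)
/-- Reduced density matrix of qubit 2. -/
def rho2 (ψ : QState) (a b : Fin 2) : ℂ := ∑ i, ∑ j, ∑ k, ψ i a j k * star (ψ i b j k)
/-- Reduced density matrix of qubit 3. -/
def rho3 (ψ : QState) (a b : Fin 2) : ℂ := ∑ i, ∑ j, ∑ k, ψ i j a k * star (ψ i j b k)
/-- Reduced density matrix of qubit 4. -/
def rho4 (ψ : QState) (a b : Fin 2) : ℂ := ∑ i, ∑ j, ∑ k, ψ i j k a * star (ψ i j k b)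

/-- tr(ρ²) for a one-qubit density matrix. -/
def purity1 (ρ : Fin 2 → Fin 2 → ℂ) : ℂ := ∑ a, ∑ b, ρ a b * ρ b a

/-- Reduced density matrix of qubits 1,2. -/
def rho12 (ψ : QState) (a b : Fin 2 × Fin 2) : ℂ :=
  ∑ i, ∑ j, ψ a.1 a.2 i j * star (ψ b.1 b.2 i j)
/-- Reduced density matrix of qubits 1,3. -/
def rho13 (ψ : QState) (a b : Fin 2 × Fin 2) : ℂ :=
  ∑ i, ∑ j, ψ a.1 i a.2 j * star (ψ b.1 i b.2 j)
/-- Reduced density matrix of qubits 1,4. -/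
def rho14 (ψ : QState) (a b : Fin 2 × Fin 2) : ℂ :=
  ∑ i, ∑ j, ψ a.1 i j a.2 * star (ψ b.1 i j b.2)

/-- tr(ρ²) for a two-qubit density matrix. -/
def purity2 (ρ : Fin 2 × Fin 2 → Fin 2 × Fin 2 → ℂ) : ℂ := ∑ a, ∑ b, ρ a b * ρ b a

/-- The concurrence across a bipartition, from tr(ρ²). -/
def conc (p : ℂ) : ℝ := Real.sqrt (2 * (1 - p.re))

/-- The seven distinct bipartition concurrences of a four-qubit state. -/
def concs (ψ : QState) : Fin 7 → ℝ :=
  ![conc (purity1 (rho1 ψ)), conc (purity1 (rho2 ψ)), conc (purity1 (rho3 ψ)),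
    conc (purity1 (rho4 ψ)), conc (purity2 (rho12 ψ)), conc (purity2 (rho13 ψ)),
    conc (purity2 (rho14 ψ))]

def psiA : QState := fun a b c d =>
  if (a, b, c, d) = (0, 0, 0, 0) ∨ (a, b, c, d) = (1, 0, 1, 1) ∨
     (a, b, c, d) = (1, 1, 0, 1) ∨ (a, b, c, d) = (1, 1, 1, 0)
  then (1 / 2 : ℂ) else 0

def psiB : QState := fun a b c d =>
  if (a, b, c, d) = (0, 0, 0, 0) ∨ (a, b, c, d) = (0, 1, 0, 1) ∨
     (a, b, c, d) = (1, 0, 0, 0) ∨ (a, b, c, d) = (1, 1, 1, 0)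
  then (1 / 2 : ℂ) else 0

/-!
The concurrence `√(2(1 - p))` is antitone in the purity `p`, so the minimum over the seven
bipartitions is the concurrence of the largest purity. For both states the purities are in
`{3/8, 1/2, 5/8}`, the largest is `5/8` (attained at qubit 1), and `√(2 · 3/8) = √3/2`.
-/

theorem conc_le_conc {p q : ℂ} (h : p.re ≤ q.re) : conc q ≤ conc p :=
  Real.sqrt_le_sqrt (by linarith)

theorem conc_five_eighths : conc (5 / 8) = Real.sqrt 3 / 2 := by
  rw [conc, show 2 * (1 - (5 / 8 : ℂ).re) = 3 / 2 ^ 2 by norm_num, Real.sqrt_div' _ (by positivity),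
    Real.sqrt_sq zero_le_two]

theorem Finset.inf'_conc_comp_eq {ι : Type*} {s : Finset ι} (hs : s.Nonempty) {f : ι → ℂ} {i₀ : ι}
    (hi₀ : i₀ ∈ s) (hmax : ∀ i ∈ s, (f i).re ≤ (f i₀).re) :
    s.inf' hs (conc ∘ f) = conc (f i₀) :=
  le_antisymm (s.inf'_le _ hi₀) (s.le_inf' hs _ fun i hi => conc_le_conc (hmax i hi))

def purities (ψ : QState) : Fin 7 → ℂ :=
  ![purity1 (rho1 ψ), purity1 (rho2 ψ), purity1 (rho3 ψ), purity1 (rho4 ψ),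
    purity2 (rho12 ψ), purity2 (rho13 ψ), purity2 (rho14 ψ)]

theorem concs_eq_conc_comp_purities (ψ : QState) : concs ψ = conc ∘ purities ψ := by
  ext i; fin_cases i <;> rfl

theorem purities_psiA : purities psiA = ![5 / 8, 1 / 2, 1 / 2, 1 / 2, 3 / 8, 3 / 8, 3 / 8] := by
  ext i; fin_cases i <;>
    simp only [purities, purity1, purity2, rho1, rho2, rho3, rho4, rho12, rho13, rho14, psiA,
      Fintype.sum_prod_type, Fin.sum_univ_two] <;>
    norm_num [Prod.ext_iff]

theorem purities_psiB : purities psiB = ![5 / 8, 1 / 2, 5 / 8, 5 / 8, 3 / 8, 1 / 2, 1 / 2] := by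
  ext i; fin_cases i <;>
    simp only [purities, purity1, purity2, rho1, rho2, rho3, rho4, rho12, rho13, rho14, psiB,
      Fintype.sum_prod_type, Fin.sum_univ_two] <;>
    norm_num [Prod.ext_iff]

theorem inf'_concs_of_purities_le_five_eighths {ψ : QState} (h₀ : purities ψ 0 = 5 / 8)
    (hle : ∀ i, (purities ψ i).re ≤ 5 / 8) :
    Finset.univ.inf' Finset.univ_nonempty (concs ψ) = Real.sqrt 3 / 2 := by
  rw [concs_eq_conc_comp_purities, Finset.univ.inf'_conc_comp_eq _ (Finset.mem_univ 0), h₀,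
    conc_five_eighths]
  intro i _
  simpa [h₀] using hle i

theorem stmt10 :
    Finset.univ.inf' Finset.univ_nonempty (concs psiA) = Real.sqrt 3 / 2 ∧
    Finset.univ.inf' Finset.univ_nonempty (concs psiB) = Real.sqrt 3 / 2 := by
  refine ⟨inf'_concs_of_purities_le_five_eighths (by simp [purities_psiA]) ?_,
    inf'_concs_of_purities_le_five_eighths (by simp [purities_psiB]) ?_⟩ <;>
  intro i <;> fin_cases i <;> norm_num [purities_psiA, purities_psiB]
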